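/- arXiv:2206.12031 — 3 statements merged into one kernel-verified Lean document; each statement's English description precedes it below -/
import Mathlib

section
/- Under the coordinate transformation x = x̄/w̄^3, y = 1/w̄^4, z = z̄/w̄ (valid for w̄ > 0), the vector field Y(x,y,z) = (α y + γ z + y z, β x - y + x^2, -4x), after multiplying time by w̄^2, pulls back to the vector field on {w̄ > 0} given by: x̄' = z̄ + α w̄ + (3/4) x̄ (w̄^2 - β w̄^3 x̄ - x̄^2) + γ z̄ w̄^4, z̄' = -4 x̄ + (1/4) z̄ (w̄^2 - β w̄^3 x̄ - x̄^2), w̄' = (1/4) w̄ (w̄^2 - β w̄^3 x̄ - x̄^2). -/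
/-- The vector field Y(x,y,z) = (α y + γ z + y z, β x - y + x², -4x). -/
def Yfield (α β γ : ℝ) (p : ℝ × ℝ × ℝ) : ℝ × ℝ × ℝ :=
  (α * p.2.1 + γ * p.2.2 + p.2.1 * p.2.2, β * p.1 - p.2.1 + p.1 ^ 2, -4 * p.1)

/-- The compactification chart Φ(x̄,z̄,w̄) = (x̄/w̄³, 1/w̄⁴, z̄/w̄). -/
noncomputable def Phi (p : ℝ × ℝ × ℝ) : ℝ × ℝ × ℝ :=
  (p.1 / p.2.2 ^ 3, 1 / p.2.2 ^ 4, p.2.1 / p.2.2)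

/-- The desingularized compactified vector field Z. -/
noncomputable def Zfield (α β γ : ℝ) (p : ℝ × ℝ × ℝ) : ℝ × ℝ × ℝ :=
  let x := p.1; let z := p.2.1; let w := p.2.2
  (z + α * w + 3 / 4 * x * (w ^ 2 - β * w ^ 3 * x - x ^ 2) + γ * z * w ^ 4,
   -4 * x + 1 / 4 * z * (w ^ 2 - β * w ^ 3 * x - x ^ 2),
   1 / 4 * w * (w ^ 2 - β * w ^ 3 * x - x ^ 2))

/-!
The Jacobian of Φ at `p` is read off from the velocity of `t ↦ Φ (p + t • v)` at `t = 0`: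
every component of that curve has the form `(a + t c) / (b + t d) ^ n`. Once the Jacobian is
explicit, the pullback identity is an identity of rational functions in `(x̄, z̄, w̄)` whose
denominators are powers of `w̄`.
-/

theorem hasDerivAt_affine_div_pow {𝕜 : Type*} [NontriviallyNormedField 𝕜] (a b c d : 𝕜) (n : ℕ)
    (hb : b ≠ 0) :
    HasDerivAt (fun t : 𝕜 => (a + t * c) / (b + t * d) ^ n)
      (c / b ^ n - n * a * d / b ^ (n + 1)) 0 := by
  have affine : ∀ e f : 𝕜, HasDerivAt (fun t : 𝕜 => e + t * f) f 0 := fun e f => by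
    simpa using ((hasDerivAt_id (0 : 𝕜)).mul_const f).const_add e
  refine ((affine a c).fun_div ((affine b d).fun_pow n)
    (by simpa using pow_ne_zero n hb)).congr_deriv ?_
  rcases n with _ | n
  · simp
  · simp only [zero_mul, add_zero, Nat.add_sub_cancel]
    field_simp
    ring

section Chart

variable {p : ℝ × ℝ × ℝ}

theorem differentiableAt_Phi (hw : p.2.2 ≠ 0) : DifferentiableAt ℝ Phi p := by
  unfold Phi
  fun_prop (disch := simp [hw])

theorem fderiv_Phi_apply (hw : p.2.2 ≠ 0) (v : ℝ × ℝ × ℝ) :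
    fderiv ℝ Phi p v =
      (v.1 / p.2.2 ^ 3 - 3 * p.1 * v.2.2 / p.2.2 ^ 4, -4 * v.2.2 / p.2.2 ^ 5,
        v.2.1 / p.2.2 - p.2.1 * v.2.2 / p.2.2 ^ 2) := by
  have hline : HasDerivAt (fun t : ℝ => p + t • v) v 0 := by
    simpa using ((hasDerivAt_id (0 : ℝ)).smul_const v).const_add p
  refine ((differentiableAt_Phi hw).hasFDerivAt.comp_hasDerivAt_of_eq 0 hline (by simp)).unique ?_
  have hPhi_line : Phi ∘ (fun t : ℝ => p + t • v) = fun t =>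
      ((p.1 + t * v.1) / (p.2.2 + t * v.2.2) ^ 3, (1 + t * 0) / (p.2.2 + t * v.2.2) ^ 4,
        (p.2.1 + t * v.2.1) / (p.2.2 + t * v.2.2) ^ 1) := by
    ext t <;> simp [Phi]
  rw [hPhi_line]
  refine ((hasDerivAt_affine_div_pow _ _ _ _ 3 hw).prodMk
    ((hasDerivAt_affine_div_pow _ _ _ _ 4 hw).prodMk
      (hasDerivAt_affine_div_pow _ _ _ _ 1 hw))).congr_deriv ?_
  simp only [Prod.mk.injEq]
  push_cast
  exact ⟨by ring, by ring, by ring⟩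

end Chart

/-- Under Φ with time rescaled by w̄², Y pulls back to Z on {w̄ > 0}:
DΦ(p) · Z(p) = w̄² · Y(Φ(p)). -/
theorem stmt6 (α β γ : ℝ) (p : ℝ × ℝ × ℝ) (hw : 0 < p.2.2) :
    ∃ D : ℝ × ℝ × ℝ →L[ℝ] ℝ × ℝ × ℝ,
      HasFDerivAt Phi D p ∧ D (Zfield α β γ p) = p.2.2 ^ 2 • Yfield α β γ (Phi p) := by
  have hw0 : p.2.2 ≠ 0 := hw.ne'
  refine ⟨fderiv ℝ Phi p, (differentiableAt_Phi hw0).hasFDerivAt, ?_⟩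
  rw [fderiv_Phi_apply hw0]
  simp only [Zfield, Yfield, Phi, Prod.smul_mk, smul_eq_mul, Prod.mk.injEq]
  refine ⟨?_, ?_, ?_⟩ <;> field_simp <;> ring
end

section
/- Along the blown-up vector field Z_B, parameterizing the cylinder of radius r around the axis {x_B = 0, z_B = -α} by x_B = r cos θ, z_B = 2 r sin θ - α, the average radial flux satisfies ∫₀^{2π} r'(θ, w_B) dθ = (1/8) π r w_B^2 (4 - 3 r^2), where r r' = x_B x_B' + (z_B + α) z_B' / 4 evaluated along Z_B. -/
/-!
Expanded in `cos θ` and `sin θ cos θ`, the numerator `r r'` is a quartic whose terms in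
`sin θ cos θ`, `cos θ` and `cos³ θ` integrate to zero over a full period, so only
`∫ cos² = π` and `∫ cos⁴ = 3π/4` contribute:
`∫ r r' dθ = π r² w² / 2 - 3 π r⁴ w² / 8`.
-/

open Real intervalIntegral

theorem integral_cos_pow_four_zero_two_pi : ∫ θ in (0 : ℝ)..2 * π, cos θ ^ 4 = 3 * π / 4 := by
  rw [integral_cos_pow (n := 2), integral_cos_sq]
  simp only [sin_two_pi, sin_zero, cos_two_pi, cos_zero]
  ring

theorem integral_zero_two_pi_trig_quartic (a b c d e : ℝ) :
    ∫ θ in (0 : ℝ)..2 * π,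
        (a * (sin θ * cos θ) + b * cos θ + c * cos θ ^ 2 + d * cos θ ^ 3 + e * cos θ ^ 4)
      = c * π + e * (3 * π / 4) := by
  have hint {f : ℝ → ℝ} (hf : Continuous f) : IntervalIntegrable f MeasureTheory.volume 0 (2 * π) :=
    hf.intervalIntegrable _ _
  rw [integral_add (hint (by fun_prop)) (hint (by fun_prop)),
    integral_add (hint (by fun_prop)) (hint (by fun_prop)),
    integral_add (hint (by fun_prop)) (hint (by fun_prop)),
    integral_add (hint (by fun_prop)) (hint (by fun_prop))]
  simp [integral_cos_pow_four_zero_two_pi]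

theorem stmt16_general (α β γ r w : ℝ) :
    ∫ θ in (0 : ℝ)..(2 * π),
        (γ * w ^ 4 * (r * cos θ) * (2 * r * sin θ - α)
          + 1 / 2 * (r * cos θ) ^ 2 * w ^ 2
            * (1 - β * (r * cos θ) * w ^ 2 - (r * cos θ) ^ 2)) / r
      = 1 / 8 * π * r * w ^ 2 * (4 - 3 * r ^ 2) := by
  have hexpand : ∀ θ : ℝ,
      γ * w ^ 4 * (r * cos θ) * (2 * r * sin θ - α)
          + 1 / 2 * (r * cos θ) ^ 2 * w ^ 2 * (1 - β * (r * cos θ) * w ^ 2 - (r * cos θ) ^ 2)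
        = 2 * γ * w ^ 4 * r ^ 2 * (sin θ * cos θ) + -(γ * w ^ 4 * α * r) * cos θ
          + r ^ 2 * w ^ 2 / 2 * cos θ ^ 2 + -(β * r ^ 3 * w ^ 4 / 2) * cos θ ^ 3
          + -(r ^ 4 * w ^ 2 / 2) * cos θ ^ 4 := fun θ => by ring
  simp_rw [integral_div, hexpand, integral_zero_two_pi_trig_quartic]
  -- at `r = 0` both sides vanish, since `x / 0 = 0`
  rcases eq_or_ne r 0 with rfl | hr
  · simp
  · field_simp
    ring

/-- Parameterizing the cylinder of radius r around the axis {x_B = 0, z_B = -α}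
by x_B = r cos θ, z_B = 2 r sin θ - α, the average radial flux of Z_B satisfies
∫₀^{2π} r' dθ = (1/8) π r w² (4 - 3r²), where
r r' = γ w⁴ x_B z_B + (1/2) x_B² w² (1 - β x_B w² - x_B²). -/
theorem stmt16 (α β γ r w : ℝ) (hr : 0 < r) :
    ∫ θ in (0 : ℝ)..(2 * π),
        (γ * w ^ 4 * (r * cos θ) * (2 * r * sin θ - α)
          + 1 / 2 * (r * cos θ) ^ 2 * w ^ 2
            * (1 - β * (r * cos θ) * w ^ 2 - (r * cos θ) ^ 2)) / r
      = 1 / 8 * π * r * w ^ 2 * (4 - 3 * r ^ 2) :=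
  stmt16_general α β γ r w
end

section
/- For the planar vector field W(x̄, z̄) = (z̄ - (3/4) x̄^3, -4 x̄ - (1/4) x̄^2 z̄), every solution is bounded forward in time: if (x̄(t), z̄(t)) is a solution defined on [0, T), then 4 x̄(t)^2 + z̄(t)^2 ≤ 4 x̄(0)^2 + z̄(0)^2 for all t ∈ [0, T). -/
/-! The energy `4 x̄² + z̄²` has derivative `-6 x̄⁴ - (1/2) x̄² z̄²` along solutions, so it is
nonincreasing on `[0, T)`. -/

theorem antitoneOn_of_hasDerivAt_nonpos {D : Set ℝ} (hD : Convex ℝ D) {f f' : ℝ → ℝ}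
    (hf : ∀ x ∈ D, HasDerivAt f (f' x) x) (hf'_nonpos : ∀ x ∈ D, f' x ≤ 0) :
    AntitoneOn f D :=
  antitoneOn_of_deriv_nonpos hD (fun x hx => (hf x hx).continuousAt.continuousWithinAt)
    (fun x hx => (hf x (interior_subset hx)).differentiableAt.differentiableWithinAt)
    (fun x hx => (hf x (interior_subset hx)).deriv ▸ hf'_nonpos x (interior_subset hx))

theorem hasDerivAt_energy {x z : ℝ → ℝ} {t : ℝ}
    (hx : HasDerivAt x (z t - 3 / 4 * x t ^ 3) t)
    (hz : HasDerivAt z (-4 * x t - 1 / 4 * x t ^ 2 * z t) t) :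
    HasDerivAt (fun s => 4 * x s ^ 2 + z s ^ 2)
      (-6 * x t ^ 4 - 1 / 2 * x t ^ 2 * z t ^ 2) t :=
  (((hx.pow 2).const_mul 4).add (hz.pow 2)).congr_deriv (by ring)

theorem energy_dissipation_nonpos (a b : ℝ) : -6 * a ^ 4 - 1 / 2 * a ^ 2 * b ^ 2 ≤ 0 := by
  nlinarith [pow_nonneg (sq_nonneg a) 2, mul_nonneg (sq_nonneg a) (sq_nonneg b)]

/-- Every solution of x̄' = z̄ - (3/4)x̄³, z̄' = -4x̄ - (1/4)x̄²z̄ on [0,T) is bounded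
forward in time: 4x̄(t)² + z̄(t)² ≤ 4x̄(0)² + z̄(0)². -/
theorem stmt18 (x z : ℝ → ℝ) (T : ℝ) (hT : 0 < T)
    (hx : ∀ t ∈ Set.Ico (0 : ℝ) T, HasDerivAt x (z t - 3 / 4 * x t ^ 3) t)
    (hz : ∀ t ∈ Set.Ico (0 : ℝ) T,
      HasDerivAt z (-4 * x t - 1 / 4 * x t ^ 2 * z t) t) :
    ∀ t ∈ Set.Ico (0 : ℝ) T,
      4 * x t ^ 2 + z t ^ 2 ≤ 4 * x 0 ^ 2 + z 0 ^ 2 := by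
  have hanti : AntitoneOn (fun s => 4 * x s ^ 2 + z s ^ 2) (Set.Ico 0 T) :=
    antitoneOn_of_hasDerivAt_nonpos (convex_Ico 0 T)
      (fun s hs => hasDerivAt_energy (hx s hs) (hz s hs))
      (fun s _ => energy_dissipation_nonpos (x s) (z s))
  exact fun t ht => hanti ⟨le_rfl, hT⟩ ht ht.1
end
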